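/- For every natural number n, the Fibonacci-Fubini number satisfies the Dobiński-like formula 𝓕_n = (1/√5) · ( (α/e^α) · Σ_{k=0}^{∞} α^k k^n / k! − (β/e^β) · Σ_{k=0}^{∞} β^k k^n / k! ), where α = (1+√5)/2 and β = (1−√5)/2; in particular both infinite series converge. -/

import Mathlib

/-- Stirling numbers of the second kind. -/
def stirling2 : ℕ → ℕ → ℕ
  | 0, 0 => 1
  | 0, _ + 1 => 0
  | _ + 1, 0 => 0
  | n + 1, k + 1 => stirling2 n k + (k + 1) * stirling2 n (k + 1)

/-- Fibonacci-Fubini numbers. -/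
def fibonacciFubini (n : ℕ) : ℕ :=
  ∑ k ∈ Finset.range (n + 1), Nat.fib (k + 1) * stirling2 n k

/-!
Expanding `k ^ n = ∑ⱼ S(n, j) k(k-1)⋯(k-j+1)` and summing against `x ^ k / k!` gives Dobiński's
formula `∑ₖ x ^ k k ^ n / k! = eˣ Tₙ(x)` for the Touchard polynomial `Tₙ(x) = ∑ⱼ S(n, j) x ^ j`,
since the falling factorial turns the exponential series into `x ^ j eˣ`. Binet's formula
`F_{j+1} = (φ ^ (j+1) - ψ ^ (j+1)) / √5` then writes `𝓕ₙ` as `(φ Tₙ(φ) - ψ Tₙ(ψ)) / √5`.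
-/

open Finset

theorem stirling2_eq_stirlingSecond : ∀ n k : ℕ, stirling2 n k = Nat.stirlingSecond n k
  | 0, 0 | 0, _ + 1 | _ + 1, 0 => rfl
  | n + 1, k + 1 => by
    rw [stirling2, Nat.stirlingSecond_succ_succ, stirling2_eq_stirlingSecond n k,
      stirling2_eq_stirlingSecond n (k + 1), add_comm]

namespace Nat

theorem mul_descFactorial (k j : ℕ) :
    k * k.descFactorial j = k.descFactorial (j + 1) + j * k.descFactorial j := by
  rw [descFactorial_succ]
  rcases le_or_gt j k with h | h
  · rw [← add_mul, Nat.sub_add_cancel h]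
  · simp [descFactorial_eq_zero_iff_lt.2 h]

theorem pow_eq_sum_stirlingSecond_mul_descFactorial (n k : ℕ) :
    k ^ n = ∑ j ∈ range (n + 1), stirlingSecond n j * k.descFactorial j := by
  induction n with
  | zero => simp
  | succ n ih =>
    have shift : ∑ j ∈ range (n + 1), (j + 1) * stirlingSecond n (j + 1) * k.descFactorial (j + 1)
        = ∑ j ∈ range (n + 1), j * stirlingSecond n j * k.descFactorial j := by
      have h := sum_range_succ' (fun j => j * stirlingSecond n j * k.descFactorial j) (n + 1)
      rw [sum_range_succ, stirlingSecond_eq_zero_of_lt n.lt_succ_self] at h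
      simpa using h.symm
    calc k ^ (n + 1)
        = ∑ j ∈ range (n + 1), stirlingSecond n j * (k * k.descFactorial j) := by
          rw [pow_succ', ih, mul_sum]; exact sum_congr rfl fun j _ => by ring
      _ = ∑ j ∈ range (n + 1), (j + 1) * stirlingSecond n (j + 1) * k.descFactorial (j + 1)
          + ∑ j ∈ range (n + 1), stirlingSecond n j * k.descFactorial (j + 1) := by
          rw [shift, ← sum_add_distrib]
          exact sum_congr rfl fun j _ => by rw [mul_descFactorial]; ring
      _ = ∑ j ∈ range (n + 2), stirlingSecond (n + 1) j * k.descFactorial j := by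
          rw [sum_range_succ' (fun j => stirlingSecond (n + 1) j * k.descFactorial j),
            ← sum_add_distrib]
          simp only [stirlingSecond_succ_succ, stirlingSecond_succ_zero, zero_mul, add_zero]
          exact sum_congr rfl fun j _ => by ring

end Nat

def touchard {R : Type*} [Semiring R] (n : ℕ) (x : R) : R :=
  ∑ j ∈ range (n + 1), (Nat.stirlingSecond n j : R) * x ^ j

section Exp

open NormedSpace

variable {𝕂 : Type*} [NormedField 𝕂] [NormedAlgebra ℚ 𝕂] [CompleteSpace 𝕂]

theorem hasSum_pow_mul_descFactorial_div_factorial (x : 𝕂) (j : ℕ) :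
    HasSum (fun k : ℕ => x ^ k * (k.descFactorial j : 𝕂) / k.factorial) (x ^ j * exp x) := by
  have := algebraRat.charZero 𝕂
  have vanish : ∑ k ∈ range j, x ^ k * (k.descFactorial j : 𝕂) / k.factorial = 0 :=
    sum_eq_zero fun k hk => by
      simp [Nat.descFactorial_eq_zero_iff_lt.2 (mem_range.1 hk)]
  have shifted (m : ℕ) : x ^ (m + j) * ((m + j).descFactorial j : 𝕂) / (m + j).factorial
      = x ^ j * (x ^ m / m.factorial) := by
    have h := Nat.factorial_mul_descFactorial (Nat.le_add_left j m)
    rw [Nat.add_sub_cancel] at h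
    rw [← h, Nat.cast_mul, pow_add]
    have : ((m + j).descFactorial j : 𝕂) ≠ 0 :=
      Nat.cast_ne_zero.2 (Nat.descFactorial_pos.2 (Nat.le_add_left j m)).ne'
    field_simp
  rw [← hasSum_nat_add_iff' j, vanish, sub_zero]
  simpa only [shifted] using (expSeries_div_hasSum_exp x).mul_left (x ^ j)

theorem hasSum_pow_mul_pow_div_factorial (x : 𝕂) (n : ℕ) :
    HasSum (fun k : ℕ => x ^ k * (k : 𝕂) ^ n / k.factorial) (exp x * touchard n x) := by
  have expand (k : ℕ) : x ^ k * (k : 𝕂) ^ n / k.factorial = ∑ j ∈ range (n + 1),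
      (Nat.stirlingSecond n j : 𝕂) * (x ^ k * k.descFactorial j / k.factorial) := by
    have hk := congrArg (Nat.cast : ℕ → 𝕂) (Nat.pow_eq_sum_stirlingSecond_mul_descFactorial n k)
    push_cast at hk
    rw [hk, mul_sum, sum_div]
    exact sum_congr rfl fun j _ => by ring
  have collect : exp x * touchard n x =
      ∑ j ∈ range (n + 1), (Nat.stirlingSecond n j : 𝕂) * (x ^ j * exp x) := by
    rw [touchard, mul_sum]
    exact sum_congr rfl fun j _ => by ring
  simp only [expand, collect]
  exact hasSum_sum fun j _ =>
    (hasSum_pow_mul_descFactorial_div_factorial x j).mul_left (Nat.stirlingSecond n j : 𝕂)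

end Exp

open goldenRatio

theorem fibonacciFubini_eq_touchard (n : ℕ) :
    (fibonacciFubini n : ℝ) = (φ * touchard n φ - ψ * touchard n ψ) / √5 := by
  simp only [fibonacciFubini, touchard, Nat.cast_sum, Nat.cast_mul, Real.coe_fib_eq, mul_sum,
    ← sum_sub_distrib, sum_div, stirling2_eq_stirlingSecond]
  exact sum_congr rfl fun j _ => by ring

open Real in
/-- Dobiński-like formula for the Fibonacci-Fubini numbers. -/
theorem fibonacciFubini_dobinski (n : ℕ) :
    Summable (fun k : ℕ =>
      ((1 + Real.sqrt 5) / 2) ^ k * (k : ℝ) ^ n / (k.factorial : ℝ)) ∧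
    Summable (fun k : ℕ =>
      ((1 - Real.sqrt 5) / 2) ^ k * (k : ℝ) ^ n / (k.factorial : ℝ)) ∧
    (fibonacciFubini n : ℝ) =
      (1 / Real.sqrt 5) *
        ((((1 + Real.sqrt 5) / 2) / Real.exp ((1 + Real.sqrt 5) / 2)) *
            ∑' k : ℕ, ((1 + Real.sqrt 5) / 2) ^ k * (k : ℝ) ^ n / (k.factorial : ℝ) -
          (((1 - Real.sqrt 5) / 2) / Real.exp ((1 - Real.sqrt 5) / 2)) *
            ∑' k : ℕ, ((1 - Real.sqrt 5) / 2) ^ k * (k : ℝ) ^ n / (k.factorial : ℝ)) := by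
  have hφ := hasSum_pow_mul_pow_div_factorial φ n
  have hψ := hasSum_pow_mul_pow_div_factorial ψ n
  rw [← Real.exp_eq_exp_ℝ] at hφ hψ
  refine ⟨hφ.summable, hψ.summable, ?_⟩
  rw [hφ.tsum_eq, hψ.tsum_eq, fibonacciFubini_eq_touchard]
  field_simp
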